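/- For every α ∈ (0,1) and every δ ≥ 0, Φ(Φ^{−1}(α/2) − δ) ≤ α·Φ(−δ). -/

import Mathlib

/-- The standard normal cumulative distribution function. -/
noncomputable def stdNormalCDF (x : ℝ) : ℝ :=
  ∫ t in Set.Iic x, (Real.sqrt (2 * Real.pi))⁻¹ * Real.exp (-(t ^ 2) / 2)

/-- The inverse `Φ^{−1}` of the standard normal cdf on `(0,1)`. -/
noncomputable def stdNormalCDFInv (p : ℝ) : ℝ :=
  Function.invFun stdNormalCDF p

/-!
The standard normal cdf `Φ` is log-concave. Indeed `t φ(t) = -φ'(t)` gives the Mills-type bound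
`-x Φ(x) ≤ φ(x)`, which is exactly what makes the hazard `φ / Φ` decreasing; hence for `b ≤ 0`
the ratio `Φ(a + b) / Φ(a)` is nondecreasing in `a`. Taking `b = Φ⁻¹(α/2) ≤ 0` and comparing
`a = -δ` with `a = 0` gives `Φ(b - δ) / Φ(-δ) ≤ Φ(b) / Φ(0) = α`.
-/

open Real MeasureTheory Set Filter ProbabilityTheory

noncomputable def stdNormalPDF (x : ℝ) : ℝ := (√(2 * π))⁻¹ * exp (-(x ^ 2) / 2)

lemma stdNormalPDF_eq_gaussianPDFReal : stdNormalPDF = gaussianPDFReal 0 1 := by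
  ext x; simp [stdNormalPDF, gaussianPDFReal]

lemma stdNormalPDF_pos (x : ℝ) : 0 < stdNormalPDF x := by
  rw [stdNormalPDF_eq_gaussianPDFReal]; exact gaussianPDFReal_pos _ _ _ one_ne_zero

lemma integrable_stdNormalPDF : Integrable stdNormalPDF := by
  rw [stdNormalPDF_eq_gaussianPDFReal]; exact integrable_gaussianPDFReal _ _

lemma integral_stdNormalPDF : ∫ x, stdNormalPDF x = 1 := by
  rw [stdNormalPDF_eq_gaussianPDFReal]; exact integral_gaussianPDFReal_eq_one _ one_ne_zero

lemma stdNormalPDF_neg (x : ℝ) : stdNormalPDF (-x) = stdNormalPDF x := by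
  simp [stdNormalPDF]

lemma continuous_stdNormalPDF : Continuous stdNormalPDF := by
  unfold stdNormalPDF; fun_prop

lemma hasDerivAt_stdNormalPDF (x : ℝ) : HasDerivAt stdNormalPDF (-x * stdNormalPDF x) x := by
  have h : HasDerivAt (fun t : ℝ => -(t ^ 2) / 2) (-x) x :=
    ((hasDerivAt_pow 2 x).fun_neg.div_const 2).congr_deriv (by ring)
  exact (h.exp.const_mul (√(2 * π))⁻¹).congr_deriv (by simp only [stdNormalPDF]; ring)

lemma tendsto_stdNormalPDF_atBot : Tendsto stdNormalPDF atBot (nhds 0) := by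
  have h : Tendsto (fun x : ℝ => -(x ^ 2) / 2) atBot atBot := by
    have hsq : Tendsto (fun x : ℝ => x ^ 2) atBot atTop :=
      ((tendsto_pow_atTop two_ne_zero).comp (tendsto_neg_atBot_atTop (G := ℝ))).congr
        fun x => by simp
    exact ((tendsto_neg_atTop_atBot (G := ℝ)).comp hsq).atBot_div_const (by norm_num : (0 : ℝ) < 2)
  have := (tendsto_exp_comp_nhds_zero.2 h).const_mul (√(2 * π))⁻¹
  rwa [mul_zero] at this

lemma integrable_id_mul_stdNormalPDF : Integrable (fun x => x * stdNormalPDF x) := by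
  refine ((integrable_mul_exp_neg_mul_sq (b := 2⁻¹) (by norm_num)).const_mul (√(2 * π))⁻¹).congr
    (ae_of_all _ fun x => ?_)
  simp only [stdNormalPDF]; ring_nf

lemma setIntegral_Iic_id_mul_stdNormalPDF (x : ℝ) :
    ∫ t in Iic x, t * stdNormalPDF t = -stdNormalPDF x := by
  have hderiv (t : ℝ) : HasDerivAt (fun s => -stdNormalPDF s) (t * stdNormalPDF t) t :=
    (hasDerivAt_stdNormalPDF t).fun_neg.congr_deriv (by ring)
  simpa using integral_Iic_of_hasDerivAt_of_tendsto' (fun t _ => hderiv t)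
    integrable_id_mul_stdNormalPDF.integrableOn tendsto_stdNormalPDF_atBot.neg

lemma stdNormalCDF_eq_setIntegral (x : ℝ) : stdNormalCDF x = ∫ t in Iic x, stdNormalPDF t := rfl

lemma hasDerivAt_stdNormalCDF (x : ℝ) : HasDerivAt stdNormalCDF (stdNormalPDF x) x := by
  have hsplit : stdNormalCDF = fun y => (∫ t in (0 : ℝ)..y, stdNormalPDF t) + stdNormalCDF 0 := by
    ext y
    simp only [stdNormalCDF_eq_setIntegral]
    rw [← intervalIntegral.integral_Iic_sub_Iic integrable_stdNormalPDF.integrableOn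
      integrable_stdNormalPDF.integrableOn, sub_add_cancel]
  rw [hsplit]
  exact (intervalIntegral.integral_hasDerivAt_right integrable_stdNormalPDF.intervalIntegrable
    (continuous_stdNormalPDF.stronglyMeasurableAtFilter _ _)
    continuous_stdNormalPDF.continuousAt).add_const _

lemma continuous_stdNormalCDF : Continuous stdNormalCDF :=
  continuous_iff_continuousAt.2 fun x => (hasDerivAt_stdNormalCDF x).continuousAt

lemma strictMono_stdNormalCDF : StrictMono stdNormalCDF :=
  strictMono_of_deriv_pos fun x => (hasDerivAt_stdNormalCDF x).deriv ▸ stdNormalPDF_pos x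

lemma stdNormalCDF_pos (x : ℝ) : 0 < stdNormalCDF x := by
  rw [stdNormalCDF_eq_setIntegral, setIntegral_pos_iff_support_of_nonneg_ae
    (ae_of_all _ fun t => (stdNormalPDF_pos t).le) integrable_stdNormalPDF.integrableOn,
    Function.support_eq_univ (fun t => (stdNormalPDF_pos t).ne'), univ_inter, volume_Iic]
  exact ENNReal.zero_lt_top

lemma stdNormalCDF_neg (x : ℝ) : stdNormalCDF (-x) = 1 - stdNormalCDF x := by
  have hIoi : stdNormalCDF (-x) = ∫ t in Ioi x, stdNormalPDF t := by
    rw [stdNormalCDF_eq_setIntegral, ← integral_comp_neg_Ioi]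
    simp only [stdNormalPDF_neg]
  rw [hIoi, ← integral_stdNormalPDF, ← intervalIntegral.integral_Iic_add_Ioi
    integrable_stdNormalPDF.integrableOn integrable_stdNormalPDF.integrableOn,
    stdNormalCDF_eq_setIntegral, add_sub_cancel_left]

lemma stdNormalCDF_zero : stdNormalCDF 0 = 1 / 2 := by
  linarith [neg_zero (G := ℝ) ▸ stdNormalCDF_neg 0]

lemma neg_mul_stdNormalCDF_le (x : ℝ) : -x * stdNormalCDF x ≤ stdNormalPDF x :=
  calc -x * stdNormalCDF x = ∫ t in Iic x, -x * stdNormalPDF t := (integral_const_mul _ _).symm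
    _ ≤ ∫ t in Iic x, -(t * stdNormalPDF t) :=
      setIntegral_mono_on (integrable_stdNormalPDF.const_mul _).integrableOn
        integrable_id_mul_stdNormalPDF.neg.integrableOn measurableSet_Iic
        fun t (ht : t ≤ x) => by nlinarith [stdNormalPDF_pos t]
    _ = stdNormalPDF x := by rw [integral_neg, setIntegral_Iic_id_mul_stdNormalPDF, neg_neg]

lemma tendsto_stdNormalCDF_atBot : Tendsto stdNormalCDF atBot (nhds 0) :=
  tendsto_of_tendsto_of_tendsto_of_le_of_le' tendsto_const_nhds tendsto_stdNormalPDF_atBot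
    (Eventually.of_forall fun x => (stdNormalCDF_pos x).le) <|
    (eventually_le_atBot (-1)).mono fun x hx => by
      nlinarith [neg_mul_stdNormalCDF_le x, stdNormalCDF_pos x]

lemma tendsto_stdNormalCDF_atTop : Tendsto stdNormalCDF atTop (nhds 1) := by
  have h := (tendsto_stdNormalCDF_atBot.comp (tendsto_neg_atTop_atBot (G := ℝ))).const_sub 1
  rw [sub_zero] at h
  exact h.congr fun x => by simp [stdNormalCDF_neg]

lemma Ioo_subset_range_stdNormalCDF : Ioo 0 1 ⊆ range stdNormalCDF := by
  rintro p ⟨hp0, hp1⟩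
  obtain ⟨a, ha⟩ := (tendsto_stdNormalCDF_atBot.eventually (gt_mem_nhds hp0)).exists
  obtain ⟨b, hb⟩ := (tendsto_stdNormalCDF_atTop.eventually (lt_mem_nhds hp1)).exists
  exact intermediate_value_univ a b continuous_stdNormalCDF ⟨ha.le, hb.le⟩

lemma stdNormalCDF_stdNormalCDFInv {p : ℝ} (hp : p ∈ Ioo 0 1) :
    stdNormalCDF (stdNormalCDFInv p) = p :=
  Function.invFun_eq (Ioo_subset_range_stdNormalCDF hp)

lemma stdNormalCDFInv_nonpos {p : ℝ} (hp : p ∈ Ioo 0 1) (hp_le : p ≤ 1 / 2) :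
    stdNormalCDFInv p ≤ 0 := by
  rwa [← strictMono_stdNormalCDF.le_iff_le, stdNormalCDF_stdNormalCDFInv hp, stdNormalCDF_zero]

lemma antitone_stdNormalPDF_div_stdNormalCDF :
    Antitone fun x => stdNormalPDF x / stdNormalCDF x := by
  have hderiv (x : ℝ) : HasDerivAt (fun y => stdNormalPDF y / stdNormalCDF y)
      (-(stdNormalPDF x * (stdNormalPDF x + x * stdNormalCDF x)) / stdNormalCDF x ^ 2) x :=
    ((hasDerivAt_stdNormalPDF x).div (hasDerivAt_stdNormalCDF x)
      (stdNormalCDF_pos x).ne').congr_deriv (by ring)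
  refine antitone_of_deriv_nonpos (fun x => (hderiv x).differentiableAt) fun x => ?_
  rw [(hderiv x).deriv]
  have hmills : 0 ≤ stdNormalPDF x + x * stdNormalCDF x := by
    linarith [neg_mul_stdNormalCDF_le x]
  exact div_nonpos_of_nonpos_of_nonneg
    (neg_nonpos.2 (mul_nonneg (stdNormalPDF_pos x).le hmills)) (sq_nonneg _)

lemma monotone_stdNormalCDF_add_div_stdNormalCDF {b : ℝ} (hb : b ≤ 0) :
    Monotone fun a => stdNormalCDF (a + b) / stdNormalCDF a := by
  have hshift (a : ℝ) : HasDerivAt (fun y => stdNormalCDF (y + b)) (stdNormalPDF (a + b)) a :=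
    (hasDerivAt_stdNormalCDF (a + b)).comp_add_const a b
  have hderiv (a : ℝ) : HasDerivAt (fun y => stdNormalCDF (y + b) / stdNormalCDF y)
      ((stdNormalPDF (a + b) * stdNormalCDF a - stdNormalCDF (a + b) * stdNormalPDF a) /
        stdNormalCDF a ^ 2) a :=
    (hshift a).div (hasDerivAt_stdNormalCDF a) (stdNormalCDF_pos a).ne'
  refine monotone_of_deriv_nonneg (fun a => (hderiv a).differentiableAt) fun a => ?_
  rw [(hderiv a).deriv]
  have hhazard := antitone_stdNormalPDF_div_stdNormalCDF (show a + b ≤ a by linarith)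
  rw [div_le_div_iff₀ (stdNormalCDF_pos a) (stdNormalCDF_pos (a + b))] at hhazard
  exact div_nonneg (by linarith) (sq_nonneg _)

/-- For every `α ∈ (0,1)` and every `δ ≥ 0`, `Φ(Φ^{−1}(α/2) − δ) ≤ α·Φ(−δ)`. -/
theorem stmt_14 (α : ℝ) (hα : α ∈ Set.Ioo (0 : ℝ) 1) (δ : ℝ) (hδ : 0 ≤ δ) :
    stdNormalCDF (stdNormalCDFInv (α / 2) - δ) ≤ α * stdNormalCDF (-δ) := by
  obtain ⟨hα0, hα1⟩ := hα
  have hp : α / 2 ∈ Ioo 0 1 := ⟨by positivity, by linarith⟩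
  set q := stdNormalCDFInv (α / 2)
  have hq : stdNormalCDF q = α / 2 := stdNormalCDF_stdNormalCDFInv hp
  have hratio : stdNormalCDF (-δ + q) / stdNormalCDF (-δ) ≤ stdNormalCDF (0 + q) / stdNormalCDF 0 :=
    monotone_stdNormalCDF_add_div_stdNormalCDF (stdNormalCDFInv_nonpos hp (by linarith))
      (neg_nonpos.2 hδ)
  rw [zero_add, hq, stdNormalCDF_zero, neg_add_eq_sub, div_le_iff₀ (stdNormalCDF_pos _)] at hratio
  linarith
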